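/- arXiv:1111.6952 — 3 statements merged into one kernel-verified Lean document; each statement's English description precedes it below -/
import Mathlib

section
/- Let q_n : Ω → ℝ be measurable exponents with c ≤ q_n ≤ q pointwise on Ω for all n (with c > 1) and ‖q_n − q‖_{L^∞(Ω)} → 0. Then for every δ > 0 there exists n₀ such that for all n ≥ n₀ and ALL u ∈ C_c^∞(Ω) simultaneously: ‖u‖_{L^{q_n(·)}(Ω)} ≤ (1+δ)·‖u‖_{L^{q(·)}(Ω)} (the error is uniform in u). -/
open MeasureTheory Metric Set Filter Topology

noncomputable section

abbrev EN (N : ℕ) : Type := EuclideanSpace ℝ (Fin N)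

/-- Luxemburg norm of `u` on `U` w.r.t. the measure `m` and variable exponent `r`. -/
noncomputable def luxNormM {N : ℕ} (m : Measure (EN N)) (U : Set (EN N))
    (r u : EN N → ℝ) : ℝ :=
  sInf {l : ℝ | 0 < l ∧ (∫ x in U, (|u x| / l) ^ (r x) ∂m) ≤ 1}

/-- Luxemburg norm w.r.t. Lebesgue measure. -/
noncomputable def luxNorm {N : ℕ} (U : Set (EN N)) (r u : EN N → ℝ) : ℝ :=
  luxNormM volume U r u

/-- `v` is a `C_c^∞` test function on `U`. -/
def TestFn {N : ℕ} (U : Set (EN N)) (v : EN N → ℝ) : Prop :=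
  ContDiff ℝ (⊤ : ℕ∞) v ∧ HasCompactSupport v ∧ tsupport v ⊆ U

/-- Pointwise length of the gradient of `v`. -/
noncomputable def grad {N : ℕ} (v : EN N → ℝ) (x : EN N) : ℝ := ‖fderiv ℝ v x‖

/-- The variable exponent Sobolev constant `S(p(·),q(·),U)`. -/
noncomputable def sobolevConst {N : ℕ} (p q : EN N → ℝ) (U : Set (EN N)) : ℝ :=
  sInf {c : ℝ | ∃ v : EN N → ℝ, TestFn U v ∧ v ≠ 0 ∧
    c = luxNorm U p (grad v) / luxNorm U q v}

/-- The critical Sobolev exponent of the value `pval` in dimension `N`. -/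
noncomputable def pstar (N : ℕ) (pval : ℝ) : ℝ := N * pval / (N - pval)

/-- `K_r⁻¹`, the best constant in the classical Sobolev inequality. -/
noncomputable def Kinv (N : ℕ) (r : ℝ) : ℝ :=
  sobolevConst (fun _ => r) (fun _ => pstar N r) (univ : Set (EN N))

/-- The localized Sobolev constant `S̄_x`. -/
noncomputable def SbarAt {N : ℕ} (p q : EN N → ℝ) (x : EN N) : ℝ :=
  sSup {s : ℝ | ∃ ε : ℝ, 0 < ε ∧ s = sobolevConst p q (ball x ε)}

/-- The critical set `A`. -/
def critSet {N : ℕ} (p q : EN N → ℝ) (Ω : Set (EN N)) : Set (EN N) :=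
  {x | x ∈ Ω ∧ p x < N ∧ q x = pstar N (p x)}

/-- The critical constant `S̄ = inf_{x ∈ A} S̄_x`. -/
noncomputable def SbarCrit {N : ℕ} (p q : EN N → ℝ) (Ω : Set (EN N)) : ℝ :=
  sInf (SbarAt p q '' critSet p q Ω)

/-- A modulus of continuity `ρ` with `ρ(t) log(1/t) → 0` as `t → 0+`. -/
def Modulus (ρ : ℝ → ℝ) : Prop :=
  Tendsto (fun t => ρ t * Real.log (1 / t)) (nhdsWithin 0 (Set.Ioi 0)) (nhds 0)

/-- `f` has modulus of continuity `ρ` on `Ω`. -/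
def HasModulusOn {N : ℕ} (f : EN N → ℝ) (ρ : ℝ → ℝ) (Ω : Set (EN N)) : Prop :=
  ∀ x ∈ Ω, ∀ y ∈ Ω, |f x - f y| ≤ ρ (dist x y)

/-!
Let `λ > 0` be admissible for `q`, i.e. `∫_Ω (|u|/λ)^q ≤ 1`, and split `Ω` according to whether
`s = |u|/λ` lies below a threshold `t ≤ 1` or not. Where `s < t`, `(s/(1+δ))^{q_n} ≤ t^c`. Where
`s ≥ t` and `q - ε ≤ q_n ≤ q`, we have `s^{q_n} ≤ t^{-ε} s^q`, and dividing by `1 + δ` gains the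
factor `(1+δ)^{-c}`. Hence `∫_Ω (|u|/((1+δ)λ))^{q_n} ≤ t^{-ε} (1+δ)^{-c} + t^c |Ω|`, which is at
most `1` once `t` is chosen small and then `ε` small, independently of `u`. So `(1+δ)λ` is
admissible for `q_n`.
-/

theorem rpow_le_rpow_of_le_of_le_one {s t p c : ℝ} (hs : 0 ≤ s) (hst : s ≤ t) (ht1 : t ≤ 1)
    (hc : 0 ≤ c) (hcp : c ≤ p) : s ^ p ≤ t ^ c :=
  (Real.rpow_le_rpow hs hst (hc.trans hcp)).trans
    (Real.rpow_le_rpow_of_exponent_ge' (hs.trans hst) ht1 hc hcp)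

theorem rpow_le_rpow_neg_mul_rpow {s t p r ε : ℝ} (ht : 0 < t) (ht1 : t ≤ 1) (hts : t ≤ s)
    (hpr : p ≤ r) (hrp : r ≤ p + ε) : s ^ p ≤ t ^ (-ε) * s ^ r := by
  have hs : 0 < s := ht.trans_le hts
  have hpow : s ^ (p - r) ≤ t ^ (-ε) := by
    rcases le_or_gt s 1 with hs1 | hs1
    · calc s ^ (p - r) ≤ s ^ (-ε) := Real.rpow_le_rpow_of_exponent_ge hs hs1 (by linarith)
        _ ≤ t ^ (-ε) := Real.rpow_le_rpow_of_nonpos ht hts (by linarith)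
    · calc s ^ (p - r) ≤ 1 := Real.rpow_le_one_of_one_le_of_nonpos hs1.le (by linarith)
        _ ≤ t ^ (-ε) := Real.one_le_rpow_of_pos_of_le_one_of_nonpos ht ht1 (by linarith)
  calc s ^ p = s ^ (p - r) * s ^ r := by rw [← Real.rpow_add hs, sub_add_cancel]
    _ ≤ t ^ (-ε) * s ^ r := by gcongr

theorem rpow_div_le_rpow_neg_mul_add {s t Λ c p r ε : ℝ} (hs : 0 ≤ s) (ht : 0 < t)
    (ht1 : t ≤ 1) (hΛ : 1 ≤ Λ) (hc : 0 ≤ c) (hcp : c ≤ p) (hpr : p ≤ r) (hrp : r ≤ p + ε) :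
    (s / Λ) ^ p ≤ t ^ (-ε) * Λ ^ (-c) * s ^ r + t ^ c := by
  have hΛ0 : 0 < Λ := zero_lt_one.trans_le hΛ
  rcases lt_or_ge s t with hst | hts
  · have hsΛ : s / Λ ≤ t := (div_le_self hs hΛ).trans hst.le
    have hsmall := rpow_le_rpow_of_le_of_le_one (by positivity) hsΛ ht1 hc hcp
    have hnonneg : 0 ≤ t ^ (-ε) * Λ ^ (-c) * s ^ r := by positivity
    linarith
  · calc (s / Λ) ^ p = Λ ^ (-p) * s ^ p := by
          rw [Real.div_rpow hs hΛ0.le, Real.rpow_neg hΛ0.le, div_eq_inv_mul]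
      _ ≤ Λ ^ (-c) * (t ^ (-ε) * s ^ r) := by
          gcongr
          exact rpow_le_rpow_neg_mul_rpow ht ht1 hts hpr hrp
      _ ≤ t ^ (-ε) * Λ ^ (-c) * s ^ r + t ^ c := by
          have htc : 0 ≤ t ^ c := by positivity
          linarith [mul_left_comm (Λ ^ (-c)) (t ^ (-ε)) (s ^ r)]

theorem rpow_le_max_one_rpow {t r C : ℝ} (ht : 0 ≤ t) (hr : 0 ≤ r) (hrC : r ≤ C) :
    t ^ r ≤ max 1 (t ^ C) := by
  rcases le_or_gt t 1 with ht1 | ht1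
  · exact le_max_of_le_left (Real.rpow_le_one ht ht1 hr)
  · exact le_max_of_le_right (Real.rpow_le_rpow_of_exponent_le ht1.le hrC)

theorem eventually_rpow_mul_lt {c V a : ℝ} (hc : 0 < c) (ha : 0 < a) :
    ∀ᶠ s in 𝓝[>] 0, s ≤ 1 ∧ s ^ c * V < a := by
  have hlim : Tendsto (fun s : ℝ => s ^ c * V) (𝓝[>] 0) (𝓝 0) := by
    simpa [Real.zero_rpow hc.ne'] using
      ((Real.continuousAt_rpow_const 0 c (Or.inr hc.le)).tendsto.mul_const V).mono_left
        (nhdsWithin_le_nhds (s := Ioi 0))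
  have hIoc : ∀ᶠ s in 𝓝[>] (0 : ℝ), s ∈ Ioc 0 1 := Ioc_mem_nhdsGT zero_lt_one
  exact (hIoc.mono fun _ hs => hs.2).and (hlim.eventually_lt_const ha)

theorem exists_rpow_neg_mul_add_rpow_mul_lt_one {m c V : ℝ} (hm : m < 1) (hc : 0 < c) :
    ∃ t : ℝ, (0 < t ∧ t ≤ 1) ∧ ∃ ε : ℝ, 0 < ε ∧ t ^ (-ε) * m + t ^ c * V < 1 := by
  obtain ⟨t, ⟨ht1, htV⟩, ht⟩ :=
    ((eventually_rpow_mul_lt (V := V) hc (sub_pos.2 hm)).and self_mem_nhdsWithin).exists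
  have hlim : Tendsto (fun ε : ℝ => t ^ (-ε) * m + t ^ c * V) (𝓝[>] 0)
      (𝓝 (m + t ^ c * V)) := by
    have hcont : Continuous fun ε : ℝ => t ^ (-ε) * m + t ^ c * V := by
      fun_prop (disch := exact ht.ne')
    simpa using (hcont.tendsto 0).mono_left nhdsWithin_le_nhds
  obtain ⟨ε, hlt, hε⟩ :=
    ((hlim.eventually_lt_const (show m + t ^ c * V < 1 by linarith)).and
      self_mem_nhdsWithin).exists
  exact ⟨t, ⟨ht, ht1⟩, ε, hε, hlt⟩

section Modular

variable {α : Type*} [MeasurableSpace α] {μ : Measure α} {U : Set α} {u : α → ℝ} {M : ℝ}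

theorem integrableOn_abs_div_rpow (hU : MeasurableSet U) (hμU : μ U < ⊤) (hu : Measurable u)
    (hM : ∀ x, |u x| ≤ M) {r : α → ℝ} (hr : Measurable r) {C : ℝ}
    (hr0 : ∀ x ∈ U, 0 ≤ r x) (hrC : ∀ x ∈ U, r x ≤ C) {l : ℝ} (hl : 0 ≤ l) :
    IntegrableOn (fun x => (|u x| / l) ^ r x) U μ := by
  refine Integrable.mono' (integrableOn_const (C := max 1 ((M / l) ^ C)) hμU.ne)
    ((hu.abs.div_const l).pow hr).aestronglyMeasurable ?_
  filter_upwards [ae_restrict_mem hU] with x hx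
  rw [Real.norm_of_nonneg (by positivity)]
  refine (rpow_le_max_one_rpow (by positivity) (hr0 x hx) (hrC x hx)).trans ?_
  gcongr
  · exact (hr0 x hx).trans (hrC x hx)
  · exact hM x

theorem exists_setIntegral_rpow_div_le_one (hU : MeasurableSet U) (hμU : μ U < ⊤)
    (hM : ∀ x, |u x| ≤ M) {r : α → ℝ} {c : ℝ} (hc : 0 < c) (hcr : ∀ x ∈ U, c ≤ r x) :
    ∃ l > 0, ∫ x in U, (|u x| / l) ^ r x ∂μ ≤ 1 := by
  obtain ⟨t, ⟨ht1, htU⟩, ht⟩ :=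
    ((eventually_rpow_mul_lt (V := μ.real U) hc zero_lt_one).and self_mem_nhdsWithin).exists
  have hl : 0 < (|M| + 1) / t := by positivity
  refine ⟨(|M| + 1) / t, hl, ?_⟩
  calc ∫ x in U, (|u x| / ((|M| + 1) / t)) ^ r x ∂μ ≤ ∫ _ in U, t ^ c ∂μ := by
        refine integral_mono_of_nonneg (Eventually.of_forall fun x => by positivity)
          (integrableOn_const hμU.ne) ?_
        filter_upwards [ae_restrict_mem hU] with x hx
        refine rpow_le_rpow_of_le_of_le_one (by positivity) ?_ ht1 hc.le (hcr x hx)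
        rw [div_div_eq_mul_div, div_le_iff₀ (by positivity)]
        nlinarith [hM x, le_abs_self M, abs_nonneg (u x)]
    _ ≤ 1 := by rw [setIntegral_const, smul_eq_mul, mul_comm]; exact htU.le

theorem setIntegral_rpow_div_le (hU : MeasurableSet U) (hμU : μ U < ⊤) (hu : Measurable u)
    (hM : ∀ x, |u x| ≤ M) {p r : α → ℝ} (hr : Measurable r) {c C ε t Λ l : ℝ} (hc : 0 ≤ c)
    (hcp : ∀ x ∈ U, c ≤ p x) (hpr : ∀ x ∈ U, p x ≤ r x) (hrC : ∀ x ∈ U, r x ≤ C)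
    (hrp : ∀ x ∈ U, r x ≤ p x + ε) (ht : 0 < t) (ht1 : t ≤ 1) (hΛ : 1 ≤ Λ) (hl : 0 < l) :
    ∫ x in U, (|u x| / (Λ * l)) ^ p x ∂μ ≤
      t ^ (-ε) * Λ ^ (-c) * ∫ x in U, (|u x| / l) ^ r x ∂μ + t ^ c * μ.real U := by
  have hint : IntegrableOn (fun x => (|u x| / l) ^ r x) U μ :=
    integrableOn_abs_div_rpow hU hμU hu hM hr
      (fun x hx => hc.trans ((hcp x hx).trans (hpr x hx))) hrC hl.le
  calc ∫ x in U, (|u x| / (Λ * l)) ^ p x ∂μ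
      ≤ ∫ x in U, (t ^ (-ε) * Λ ^ (-c) * (|u x| / l) ^ r x + t ^ c) ∂μ := by
        refine integral_mono_of_nonneg (Eventually.of_forall fun x => by positivity)
          ((hint.const_mul _).add (integrableOn_const hμU.ne)) ?_
        filter_upwards [ae_restrict_mem hU] with x hx
        rw [mul_comm Λ, ← div_div]
        exact rpow_div_le_rpow_neg_mul_add (by positivity) ht ht1 hΛ hc (hcp x hx) (hpr x hx)
          (hrp x hx)
    _ = t ^ (-ε) * Λ ^ (-c) * ∫ x in U, (|u x| / l) ^ r x ∂μ + t ^ c * μ.real U := by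
        rw [integral_add (hint.const_mul _) (integrableOn_const hμU.ne), integral_const_mul,
          setIntegral_const, smul_eq_mul, mul_comm (μ.real U)]

end Modular

theorem luxNormM_le_mul_of_forall_modular_le {N : ℕ} {m : Measure (EN N)} {U : Set (EN N)}
    {r r' u : EN N → ℝ} {Λ : ℝ} (hΛ : 0 < Λ)
    (hne : ∃ l > 0, ∫ x in U, (|u x| / l) ^ r x ∂m ≤ 1)
    (h : ∀ l > 0, ∫ x in U, (|u x| / l) ^ r x ∂m ≤ 1 →
      ∫ x in U, (|u x| / (Λ * l)) ^ r' x ∂m ≤ 1) :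
    luxNormM m U r' u ≤ Λ * luxNormM m U r u := by
  obtain ⟨l₀, hl₀, hl₀r⟩ := hne
  unfold luxNormM
  rw [← smul_eq_mul, ← Real.sInf_smul_of_nonneg hΛ.le]
  refine csInf_le_csInf ⟨0, fun l hl => hl.1.le⟩ (Set.Nonempty.smul_set ⟨l₀, hl₀, hl₀r⟩) ?_
  rintro _ ⟨l, ⟨hl, hlr⟩, rfl⟩
  exact ⟨mul_pos hΛ hl, h l hl hlr⟩

theorem stmt7_general {N : ℕ} (Ω : Set (EN N)) (hΩo : IsOpen Ω)
    (hΩb : Bornology.IsBounded Ω)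
    (q : EN N → ℝ) (qn : ℕ → EN N → ℝ)
    (hqm : Measurable q)
    (c C : ℝ) (hc : 1 < c)
    (hqb : ∀ x ∈ Ω, c ≤ q x ∧ q x ≤ C)
    (hbn : ∀ n, ∀ x ∈ Ω, c ≤ qn n x ∧ qn n x ≤ q x)
    (hq : TendstoUniformlyOn (fun n x => qn n x) q atTop Ω) :
    ∀ δ : ℝ, 0 < δ → ∃ n₀ : ℕ, ∀ n ≥ n₀, ∀ u : EN N → ℝ, TestFn Ω u →
      luxNorm Ω (qn n) u ≤ (1 + δ) * luxNorm Ω q u := by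
  intro δ hδ
  have hΩm : MeasurableSet Ω := hΩo.measurableSet
  have hμΩ : volume Ω < ⊤ := hΩb.measure_lt_top
  have hc0 : 0 < c := by linarith
  obtain ⟨t, ⟨ht, ht1⟩, ε, hε, hsmall⟩ := exists_rpow_neg_mul_add_rpow_mul_lt_one
    (V := volume.real Ω) (Real.rpow_lt_one_of_one_lt_of_neg (by linarith : 1 < 1 + δ)
      (neg_neg_of_pos hc0)) hc0
  obtain ⟨n₀, hn₀⟩ := eventually_atTop.1 (Metric.tendstoUniformlyOn_iff.1 hq ε hε)
  refine ⟨n₀, fun n hn u hu => ?_⟩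
  obtain ⟨M, hM⟩ := hu.1.continuous.bounded_above_of_compact_support hu.2.1
  simp only [Real.norm_eq_abs] at hM
  have hclose : ∀ x ∈ Ω, q x ≤ qn n x + ε := fun x hx => by
    have := hn₀ n hn x hx
    rw [Real.dist_eq] at this
    linarith [le_abs_self (q x - qn n x)]
  refine luxNormM_le_mul_of_forall_modular_le (by linarith)
    (exists_setIntegral_rpow_div_le_one hΩm hμΩ hM hc0 fun x hx => (hqb x hx).1)
    fun l hl hlq => ?_
  refine (setIntegral_rpow_div_le hΩm hμΩ hu.1.continuous.measurable hM hqm hc0.le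
    (fun x hx => (hbn n x hx).1) (fun x hx => (hbn n x hx).2) (fun x hx => (hqb x hx).2)
    hclose ht ht1 (le_add_of_nonneg_right hδ.le) hl).trans ?_
  have := mul_le_mul_of_nonneg_left hlq (by positivity : 0 ≤ t ^ (-ε) * (1 + δ) ^ (-c))
  linarith

/-- uniform (in `u`) upper estimate of the norms for exponents `q_n ≤ q`
converging uniformly to `q`. -/
theorem stmt7 {N : ℕ} (hN : 2 ≤ N) (Ω : Set (EN N)) (hΩo : IsOpen Ω)
    (hΩne : Ω.Nonempty) (hΩb : Bornology.IsBounded Ω)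
    (q : EN N → ℝ) (qn : ℕ → EN N → ℝ)
    (hqm : Measurable q) (hqnm : ∀ n, Measurable (qn n))
    (c C : ℝ) (hc : 1 < c)
    (hqb : ∀ x ∈ Ω, c ≤ q x ∧ q x ≤ C)
    (hbn : ∀ n, ∀ x ∈ Ω, c ≤ qn n x ∧ qn n x ≤ q x)
    (hq : TendstoUniformlyOn (fun n x => qn n x) q atTop Ω) :
    ∀ δ : ℝ, 0 < δ → ∃ n₀ : ℕ, ∀ n ≥ n₀, ∀ u : EN N → ℝ, TestFn Ω u →
      luxNorm Ω (qn n) u ≤ (1 + δ) * luxNorm Ω q u :=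
  stmt7_general Ω hΩo hΩb q qn hqm c C hc hqb hbn hq
end
end

section
/- Assume 0 ∈ Ω, 1 < p(0) < N and q(0) = p* where p* := N·p(0)/(N − p(0)). For ε > 0 set p_ε(x) := p(εx) and, for u ∈ C_c^∞(B_ε(0)), set u_ε(x) := u(εx) ∈ C_c^∞(B_1(0)) (so that ∇u_ε(x) = ε·(∇u)(εx)). Then for every δ > 0 there exists ε₀ > 0 such that for all 0 < ε < ε₀ and ALL nonzero u ∈ C_c^∞(B_ε(0)) simultaneously: (1−δ)·ε^{N/p*}·‖|∇u_ε|‖_{L^{p_ε(·)}(B_1(0))} ≤ ‖|∇u|‖_{L^{p(·)}(B_ε(0))} ≤ (1+δ)·ε^{N/p*}·‖|∇u_ε|‖_{L^{p_ε(·)}(B_1(0))}. -/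
open MeasureTheory Metric Set Filter Topology

noncomputable section

/-!
The substitution `x = ε y` turns `∫_{B_ε} (|∇u| / λ)^{p(x)} dx` into
`∫_{B_1} (ε^{N / p(ε y)} |∇u(ε y)| / λ)^{p(ε y)} dy`, so the Luxemburg norm of `|∇u|` on `B_ε`
equals the norm on `B_1` of `ε^{N / p(ε y)} |∇u(ε y)|`. Since `|∇u_ε(y)| = ε |∇u(ε y)|` and
`N / p* = N / p(0) - 1`, it remains to compare `ε^{N / p(ε y)}` with `ε^{N / p(0)}`. The logarithm
of their ratio is at most a constant times `ρ(|ε y|) log (1 / |ε y|)`, which is small uniformly in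
`y ∈ B_1` once `ε` is small, so the ratio lies in `[(1 + δ)⁻¹, 1 + δ]`; a pointwise bound between
two functions by a factor `k` bounds their Luxemburg norms by the same factor.
-/

open scoped Pointwise

theorem Real.rpow_le_max_one_rpow {a b e C : ℝ} (ha : 0 ≤ a) (hab : a ≤ b) (he : 0 ≤ e)
    (heC : e ≤ C) : a ^ e ≤ max 1 (b ^ C) := by
  rcases le_or_gt a 1 with ha1 | ha1
  · exact le_max_of_le_left (Real.rpow_le_one ha ha1 he)
  · exact le_max_of_le_right ((Real.rpow_le_rpow_of_exponent_le ha1.le heC).trans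
      (Real.rpow_le_rpow ha hab (he.trans heC)))

theorem abs_div_sub_div_le {a b c K : ℝ} (hK : 0 ≤ K) (hc : 0 < c) (ha : c ≤ a) (hb : 0 < b) :
    |K / a - K / b| ≤ K / (c * b) * |a - b| := by
  have ha0 : 0 < a := hc.trans_le ha
  rw [div_sub_div _ _ ha0.ne' hb.ne', mul_comm a K, ← mul_sub, abs_div, abs_mul, abs_of_nonneg hK,
    abs_of_pos (mul_pos ha0 hb), abs_sub_comm, mul_div_right_comm]
  exact mul_le_mul_of_nonneg_right
    (div_le_div_of_nonneg_left hK (by positivity) (mul_le_mul_of_nonneg_right ha hb.le))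
    (abs_nonneg _)

-- A non-integrable modular has integral `0`, which makes every such `l` admissible; this is why
-- the comparison lemmas below assume bounded functions and exponents.
def luxAdmissible {N : ℕ} (m : Measure (EN N)) (U : Set (EN N)) (r u : EN N → ℝ) : Set ℝ :=
  {l : ℝ | 0 < l ∧ (∫ x in U, (|u x| / l) ^ (r x) ∂m) ≤ 1}

section Luxemburg

variable {N : ℕ} {m : Measure (EN N)} {U : Set (EN N)} {r : EN N → ℝ}

theorem luxNormM_eq_sInf (u : EN N → ℝ) : luxNormM m U r u = sInf (luxAdmissible m U r u) :=
  rfl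

theorem luxAdmissible_const_mul {t : ℝ} (ht : 0 < t) (u : EN N → ℝ) :
    luxAdmissible m U r (fun x => t * u x) = t • luxAdmissible m U r u := by
  ext l
  have hdiv : ∀ x, |t * u x| / l = |u x| / (t⁻¹ • l) := fun x => by
    rw [abs_mul, abs_of_pos ht, smul_eq_mul]
    field_simp
  simp only [mem_smul_set_iff_inv_smul_mem₀ ht.ne', luxAdmissible, mem_ofPred_eq, hdiv,
    smul_eq_mul, mul_pos_iff_of_pos_left (inv_pos.2 ht)]

theorem luxNormM_const_mul {t : ℝ} (ht : 0 < t) (u : EN N → ℝ) :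
    luxNormM m U r (fun x => t * u x) = t * luxNormM m U r u := by
  rw [luxNormM_eq_sInf, luxAdmissible_const_mul ht, Real.sInf_smul_of_nonneg ht.le]
  rfl

theorem integrableOn_modular (hU : MeasurableSet U) (hmU : m U < ⊤) (hr : Measurable r)
    {C : ℝ} (hrU : ∀ x ∈ U, 0 ≤ r x ∧ r x ≤ C) {w : EN N → ℝ} (hw : Measurable w) {M : ℝ}
    (hwM : ∀ x ∈ U, |w x| ≤ M) {l : ℝ} (hl : 0 < l) :
    IntegrableOn (fun x => (|w x| / l) ^ (r x)) U m := by
  refine Integrable.mono' (g := fun _ => max 1 ((M / l) ^ C)) (integrableOn_const hmU.ne)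
    ((hw.abs.div_const l).pow hr).aestronglyMeasurable ((ae_restrict_iff' hU).2 ?_)
  refine ae_of_all _ fun x hx => ?_
  rw [Real.norm_eq_abs, abs_of_nonneg (by positivity)]
  exact Real.rpow_le_max_one_rpow (by positivity)
    (div_le_div_of_nonneg_right (hwM x hx) hl.le) (hrU x hx).1 (hrU x hx).2

theorem luxAdmissible_nonempty (hmU : m U < ⊤) {c : ℝ} (hc : 0 < c) (hrU : ∀ x ∈ U, c ≤ r x)
    {w : EN N → ℝ} {M : ℝ} (hwM : ∀ x ∈ U, |w x| ≤ M) :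
    (luxAdmissible m U r w).Nonempty := by
  set b : ℝ := (m.real U + 1) ^ c⁻¹
  have hb : 1 ≤ b := Real.one_le_rpow (by linarith [measureReal_nonneg (μ := m) (s := U)])
    (inv_pos.2 hc).le
  -- with `l = (|M| + 1) b` every value `|w x| / l` is at most `b⁻¹ = (m U + 1) ^ (-1/c)`
  refine ⟨(|M| + 1) * b, by positivity, ?_⟩
  have hpt : ∀ x ∈ U, ‖(|w x| / ((|M| + 1) * b)) ^ (r x)‖ ≤ (m.real U + 1)⁻¹ := by
    intro x hx
    have hwb : |w x| / ((|M| + 1) * b) ≤ b⁻¹ := by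
      rw [div_le_iff₀ (by positivity), inv_mul_eq_div, mul_div_cancel_right₀ _ (by positivity)]
      linarith [hwM x hx, le_abs_self M]
    have hb1 : b⁻¹ ≤ 1 := inv_le_one_of_one_le₀ hb
    rw [Real.norm_eq_abs, abs_of_nonneg (by positivity)]
    calc (|w x| / ((|M| + 1) * b)) ^ r x ≤ b⁻¹ ^ r x :=
          Real.rpow_le_rpow (by positivity) hwb (hc.le.trans (hrU x hx))
      _ ≤ b⁻¹ ^ c := Real.rpow_le_rpow_of_exponent_ge (by positivity) hb1 (hrU x hx)
      _ = (m.real U + 1)⁻¹ := by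
          rw [Real.inv_rpow (by positivity), ← Real.rpow_mul (by positivity),
            inv_mul_cancel₀ hc.ne', Real.rpow_one]
  calc _ ≤ ‖∫ x in U, (|w x| / ((|M| + 1) * b)) ^ r x ∂m‖ := le_abs_self _
    _ ≤ (m.real U + 1)⁻¹ * m.real U := norm_setIntegral_le_of_norm_le_const hmU hpt
    _ ≤ 1 := by
        rw [inv_mul_le_one₀ (by positivity)]
        linarith

theorem luxNormM_le_mul_of_abs_le (hU : MeasurableSet U) (hmU : m U < ⊤) (hr : Measurable r)
    {c C : ℝ} (hc : 0 < c) (hrU : ∀ x ∈ U, c ≤ r x ∧ r x ≤ C) {v w : EN N → ℝ}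
    (hv : Measurable v) (hw : Measurable w) {M : ℝ} (hwM : ∀ x ∈ U, |w x| ≤ M) {k : ℝ}
    (hk : 0 < k) (hvw : ∀ x ∈ U, |v x| ≤ k * |w x|) :
    luxNormM m U r v ≤ k * luxNormM m U r w := by
  have hrU' : ∀ x ∈ U, 0 ≤ r x ∧ r x ≤ C := fun x hx => ⟨hc.le.trans (hrU x hx).1, (hrU x hx).2⟩
  have hkwM : ∀ x ∈ U, |k * w x| ≤ k * M := fun x hx => by
    rw [abs_mul, abs_of_pos hk]
    exact mul_le_mul_of_nonneg_left (hwM x hx) hk.le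
  have hvM : ∀ x ∈ U, |v x| ≤ k * M := fun x hx => (hvw x hx).trans_eq (by
    rw [abs_mul, abs_of_pos hk]) |>.trans (hkwM x hx)
  have hsub : luxAdmissible m U r (fun x => k * w x) ⊆ luxAdmissible m U r v := by
    rintro l ⟨hl, hint⟩
    refine ⟨hl, le_trans (setIntegral_mono_on (integrableOn_modular hU hmU hr hrU' hv hvM hl)
      (integrableOn_modular hU hmU hr hrU' (hw.const_mul k) hkwM hl) hU
      fun x hx => ?_) hint⟩
    refine Real.rpow_le_rpow (by positivity) (div_le_div_of_nonneg_right ?_ hl.le) (hrU' x hx).1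
    rw [abs_mul, abs_of_pos hk]
    exact hvw x hx
  rw [← luxNormM_const_mul hk, luxNormM_eq_sInf, luxNormM_eq_sInf]
  exact csInf_le_csInf ⟨0, fun l hl => hl.1.le⟩
    (luxAdmissible_nonempty hmU hc (fun x hx => (hrU x hx).1) hkwM) hsub

end Luxemburg

theorem setIntegral_ball_zero_eq_smul {E F : Type*} [NormedAddCommGroup E] [NormedSpace ℝ E]
    [MeasurableSpace E] [BorelSpace E] [FiniteDimensional ℝ E] [NormedAddCommGroup F]
    [NormedSpace ℝ F] (μ : Measure E) [μ.IsAddHaarMeasure] (f : E → F) {ε : ℝ} (hε : 0 < ε) :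
    ∫ x in ball (0 : E) ε, f x ∂μ =
      ε ^ Module.finrank ℝ E • ∫ y in ball (0 : E) 1, f (ε • y) ∂μ := by
  rw [Measure.setIntegral_comp_smul_of_pos μ f _ hε, smul_unitBall_of_pos hε, smul_inv_smul₀]
  positivity

theorem luxNorm_ball_eq_rescale {N : ℕ} {ε : ℝ} (hε : 0 < ε) {r v : EN N → ℝ}
    (hr : ∀ x ∈ ball (0 : EN N) ε, r x ≠ 0) :
    luxNorm (ball 0 ε) r v =
      luxNorm (ball 0 1) (fun y => r (ε • y)) (fun y => ε ^ ((N : ℝ) / r (ε • y)) * v (ε • y)) := by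
  refine congrArg sInf (Set.ext fun l => and_congr_right fun hl => ?_)
  rw [setIntegral_ball_zero_eq_smul volume _ hε, finrank_euclideanSpace_fin, smul_eq_mul,
    ← integral_const_mul, setIntegral_congr_fun measurableSet_ball fun y hy => ?_]
  have hry : r (ε • y) ≠ 0 :=
    hr _ (smul_unitBall_of_pos (E := EN N) hε ▸ smul_mem_smul_set hy)
  have hεr : 0 < ε ^ ((N : ℝ) / r (ε • y)) := Real.rpow_pos_of_pos hε _
  beta_reduce
  rw [abs_mul, abs_of_pos hεr, mul_div_assoc, Real.mul_rpow hεr.le (by positivity),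
    ← Real.rpow_mul hε.le, div_mul_cancel₀ _ hry, Real.rpow_natCast]

theorem luxNorm_ball_rescale_bounds {N : ℕ} {ε : ℝ} (hε : 0 < ε) {p g : EN N → ℝ}
    (hp : Measurable p) (hg : Measurable g) {c C M : ℝ} (hc : 0 < c)
    (hpε : ∀ x ∈ ball (0 : EN N) ε, c ≤ p x ∧ p x ≤ C) (hgM : ∀ x ∈ ball (0 : EN N) ε, |g x| ≤ M)
    {k s : ℝ} (hk : 0 < k)
    (hσ : ∀ y ∈ ball (0 : EN N) 1, ε ^ ((N : ℝ) / p (ε • y) - s) ∈ Icc k⁻¹ k) :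
    k⁻¹ * (ε ^ s * luxNorm (ball 0 1) (fun y => p (ε • y)) (fun y => g (ε • y))) ≤
        luxNorm (ball 0 ε) p g ∧
      luxNorm (ball 0 ε) p g ≤
        k * (ε ^ s * luxNorm (ball 0 1) (fun y => p (ε • y)) (fun y => g (ε • y))) := by
  have hmem : ∀ y ∈ ball (0 : EN N) 1, ε • y ∈ ball (0 : EN N) ε := fun y hy =>
    smul_unitBall_of_pos (E := EN N) hε ▸ smul_mem_smul_set hy
  have hpU : ∀ y ∈ ball (0 : EN N) 1, c ≤ p (ε • y) ∧ p (ε • y) ≤ C := fun y hy => hpε _ (hmem y hy)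
  have hεs : 0 < ε ^ s := Real.rpow_pos_of_pos hε s
  set F : EN N → ℝ := fun y => ε ^ s * g (ε • y)
  set h : EN N → ℝ := fun y => ε ^ ((N : ℝ) / p (ε • y)) * g (ε • y)
  have hhF : ∀ y, |h y| = ε ^ ((N : ℝ) / p (ε • y) - s) * |F y| := fun y => by
    simp only [h, F, abs_mul, abs_of_pos hεs, abs_of_pos (Real.rpow_pos_of_pos hε _), ← mul_assoc,
      ← Real.rpow_add hε, sub_add_cancel]
  have hFM : ∀ y ∈ ball (0 : EN N) 1, |F y| ≤ ε ^ s * M := fun y hy => by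
    rw [abs_mul, abs_of_pos hεs]
    exact mul_le_mul_of_nonneg_left (hgM _ (hmem y hy)) hεs.le
  have hhle : ∀ y ∈ ball (0 : EN N) 1, |h y| ≤ k * |F y| := fun y hy => by
    rw [hhF]
    exact mul_le_mul_of_nonneg_right (hσ y hy).2 (abs_nonneg _)
  have hFle : ∀ y ∈ ball (0 : EN N) 1, |F y| ≤ k * |h y| := fun y hy => by
    rw [hhF, ← mul_assoc]
    refine le_mul_of_one_le_left (abs_nonneg _) ?_
    rw [← inv_le_iff_one_le_mul₀' hk]
    exact (hσ y hy).1
  have hmeas : Measurable fun y : EN N => p (ε • y) := hp.comp (measurable_const_smul ε)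
  have hgε : Measurable fun y : EN N => g (ε • y) := hg.comp (measurable_const_smul ε)
  have hF : Measurable F := hgε.const_mul _
  have hh : Measurable h := (measurable_const.pow (measurable_const.div hmeas)).mul hgε
  have hFL : luxNorm (ball (0 : EN N) 1) (fun y => p (ε • y)) F =
      ε ^ s * luxNorm (ball 0 1) (fun y => p (ε • y)) (fun y => g (ε • y)) :=
    luxNormM_const_mul hεs _
  have hluxF : luxNorm (ball (0 : EN N) 1) (fun y => p (ε • y)) F ≤
      k * luxNorm (ball 0 1) (fun y => p (ε • y)) h :=
    luxNormM_le_mul_of_abs_le measurableSet_ball measure_ball_lt_top hmeas hc hpU hF hh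
      (fun y hy => (hhle y hy).trans (mul_le_mul_of_nonneg_left (hFM y hy) hk.le)) hk hFle
  have hluxh : luxNorm (ball (0 : EN N) 1) (fun y => p (ε • y)) h ≤
      k * luxNorm (ball 0 1) (fun y => p (ε • y)) F :=
    luxNormM_le_mul_of_abs_le measurableSet_ball measure_ball_lt_top hmeas hc hpU hh hF hFM hk hhle
  rw [luxNorm_ball_eq_rescale hε fun x hx => (hc.trans_le (hpε x hx).1).ne', ← hFL]
  exact ⟨(inv_mul_le_iff₀ hk).2 hluxF, hluxh⟩

theorem Modulus.const_mul {ρ : ℝ → ℝ} (hρ : Modulus ρ) (K : ℝ) : Modulus fun t => K * ρ t := by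
  simpa [Modulus, mul_assoc] using Filter.Tendsto.const_mul K hρ

theorem Modulus.exists_rpow_sub_mem_Icc {E : Type*} [NormedAddCommGroup E] {ρ : ℝ → ℝ}
    (hρ : Modulus ρ) {f : E → ℝ} (hf : ∀ᶠ x in 𝓝 0, |f x - f 0| ≤ ρ ‖x‖) {k : ℝ} (hk : 1 < k) :
    ∃ ε₀ > 0, ∀ ε, 0 < ε → ε < ε₀ → ∀ x : E, ‖x‖ < ε → ε ^ (f x - f 0) ∈ Icc k⁻¹ k := by
  have hlogk : 0 < Real.log k := Real.log_pos hk
  obtain ⟨ε₁, hε₁, hρε₁⟩ := Metric.tendsto_nhdsWithin_nhds.1 hρ _ hlogk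
  obtain ⟨r, hr, hfr⟩ := Metric.eventually_nhds_iff.1 hf
  refine ⟨min (min ε₁ r) 1, by positivity, fun ε hε hεε₀ x hx => ?_⟩
  simp only [lt_min_iff] at hεε₀
  -- `|log ε| ≤ log (1 / ‖x‖)`, so the modulus condition at `t = ‖x‖` controls the exponent
  have hlog : |(f x - f 0) * Real.log ε| ≤ Real.log k := by
    rcases eq_or_ne x 0 with rfl | hx0
    · simpa using hlogk.le
    have hs : 0 < ‖x‖ := norm_pos_iff.2 hx0
    have hdecay : ρ ‖x‖ * Real.log (1 / ‖x‖) < Real.log k := by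
      refine (le_abs_self _).trans_lt ?_
      simpa [dist_zero_right, abs_of_pos hs] using
        hρε₁ (mem_Ioi.2 hs) (by simpa [abs_of_pos hs] using hx.trans hεε₀.1.1)
    calc |(f x - f 0) * Real.log ε| = |f x - f 0| * -Real.log ε := by
          rw [abs_mul, abs_of_neg (Real.log_neg hε hεε₀.2)]
      _ ≤ ρ ‖x‖ * Real.log (1 / ‖x‖) := by
          refine mul_le_mul (hfr (by simpa using hx.trans hεε₀.1.2)) ?_
            (neg_nonneg.2 (Real.log_nonpos hε.le hεε₀.2.le)) ((abs_nonneg _).trans (hfr ?_))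
          · rw [one_div, Real.log_inv, neg_le_neg_iff]
            exact Real.log_le_log hs hx.le
          · simpa using hx.trans hεε₀.1.2
      _ ≤ Real.log k := hdecay.le
  obtain ⟨hlo, hhi⟩ := abs_le.1 hlog
  rw [Real.rpow_def_of_pos hε, mul_comm]
  constructor
  · calc k⁻¹ = Real.exp (-Real.log k) := by rw [Real.exp_neg, Real.exp_log (by linarith)]
      _ ≤ _ := Real.exp_le_exp.2 hlo
  · calc _ ≤ Real.exp (Real.log k) := Real.exp_le_exp.2 hhi
      _ = k := Real.exp_log (by linarith)

theorem Modulus.exists_rpow_div_sub_div_mem_Icc {E : Type*} [NormedAddCommGroup E]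
    {ρ : ℝ → ℝ} (hρ : Modulus ρ) {p : E → ℝ} (hpρ : ∀ x, |p x - p 0| ≤ ρ ‖x‖) {c : ℝ}
    (hc : 0 < c) (hpc : ∀ᶠ x in 𝓝 0, c ≤ p x) {K : ℝ} (hK : 0 ≤ K) {k : ℝ} (hk : 1 < k) :
    ∃ ε₀ > 0, ∀ ε, 0 < ε → ε < ε₀ → ∀ x : E, ‖x‖ < ε →
      ε ^ (K / p x - K / p 0) ∈ Icc k⁻¹ k := by
  have hp0 : 0 < p 0 := hc.trans_le hpc.self_of_nhds
  refine (hρ.const_mul (K / (c * p 0))).exists_rpow_sub_mem_Icc ?_ hk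
  filter_upwards [hpc] with x hx
  exact (abs_div_sub_div_le hK hc hx hp0).trans
    (mul_le_mul_of_nonneg_left (hpρ x) (div_nonneg hK (mul_pos hc hp0).le))

theorem grad_comp_smul {N : ℕ} (u : EN N → ℝ) (ε : ℝ) :
    grad (fun x => u (ε • x)) = fun y => |ε| * grad u (ε • y) := by
  ext y
  rw [grad, fderiv_comp_smul, norm_smul, Real.norm_eq_abs, grad]

theorem div_pstar {N : ℕ} {p : ℝ} (hp : 0 < p) (hpN : p < N) :
    (N : ℝ) / pstar N p = N / p - 1 := by
  have : (N : ℝ) - p ≠ 0 := (sub_pos.2 hpN).ne'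
  have : (N : ℝ) ≠ 0 := (hp.trans hpN).ne'
  rw [pstar]
  field_simp

theorem stmt10_general {N : ℕ}
    (p q : EN N → ℝ) (hpc : Continuous p)
    (c C : ℝ) (hc : 1 < c)
    (V : Set (EN N)) (hV : V ∈ 𝓝 (0 : EN N))
    (hbV : ∀ x ∈ V, c ≤ p x ∧ p x ≤ C ∧ 1 ≤ q x ∧ q x ≤ C)
    (ρ : ℝ → ℝ) (hρ : Modulus ρ)
    (hpρ : ∀ x y : EN N, |p x - p y| ≤ ρ (dist x y))
    (hp₀ : 1 < p 0) (hpN : p 0 < N) :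
    ∀ δ : ℝ, 0 < δ → ∃ ε₀ : ℝ, 0 < ε₀ ∧ ∀ ε : ℝ, 0 < ε → ε < ε₀ →
      ∀ u : EN N → ℝ, TestFn (ball (0 : EN N) ε) u → u ≠ 0 →
        (1 - δ) * ε ^ ((N : ℝ) / pstar N (p 0)) *
            luxNorm (ball (0 : EN N) 1) (fun x => p (ε • x)) (grad (fun x => u (ε • x))) ≤
          luxNorm (ball (0 : EN N) ε) p (grad u) ∧
        luxNorm (ball (0 : EN N) ε) p (grad u) ≤
          (1 + δ) * ε ^ ((N : ℝ) / pstar N (p 0)) *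
            luxNorm (ball (0 : EN N) 1) (fun x => p (ε • x)) (grad (fun x => u (ε • x))) := by
  intro δ hδ
  obtain ⟨ε₁, hε₁, hσ⟩ := hρ.exists_rpow_div_sub_div_mem_Icc (fun x => by simpa using hpρ x 0)
    (by linarith) (mem_of_superset hV fun x hx => (hbV x hx).1) N.cast_nonneg
    (show 1 < 1 + δ by linarith)
  obtain ⟨r₀, hr₀, hr₀V⟩ := Metric.mem_nhds_iff.1 hV
  refine ⟨min ε₁ r₀, lt_min hε₁ hr₀, fun ε hε hεε₀ u hu _ => ?_⟩
  have hpV : ∀ x ∈ ball (0 : EN N) ε, c ≤ p x ∧ p x ≤ C := fun x hx =>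
    have hxV := hr₀V (ball_subset_ball (hεε₀.le.trans (min_le_right _ _)) hx)
    ⟨(hbV x hxV).1, (hbV x hxV).2.1⟩
  have hgu : Continuous (grad u) := (hu.1.continuous_fderiv (by simp)).norm
  obtain ⟨M, hM⟩ := (hu.2.1.fderiv (𝕜 := ℝ)).norm.exists_bound_of_continuous hgu
  obtain ⟨hlo, hhi⟩ := luxNorm_ball_rescale_bounds hε hpc.measurable hgu.measurable
    (by linarith) hpV (fun x _ => hM x) (by linarith) fun y hy =>
      hσ ε hε (hεε₀.trans_le (min_le_left _ _)) _ (by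
        rw [norm_smul, Real.norm_eq_abs, abs_of_pos hε]
        exact mul_lt_of_lt_one_right hε (mem_ball_zero_iff.1 hy))
  set L := luxNorm (ball (0 : EN N) 1) (fun y => p (ε • y)) (fun y => grad u (ε • y))
  have hL : luxNorm (ball (0 : EN N) 1) (fun y => p (ε • y)) (grad fun x => u (ε • x)) = ε * L := by
    rw [grad_comp_smul, abs_of_pos hε]
    exact luxNormM_const_mul hε _
  have hscale : ε ^ ((N : ℝ) / pstar N (p 0)) * (ε * L) = ε ^ ((N : ℝ) / p 0) * L := by
    rw [div_pstar (by linarith) hpN, Real.rpow_sub_one hε.ne', ← mul_assoc,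
      div_mul_cancel₀ _ hε.ne']
  have hL0 : 0 ≤ ε ^ ((N : ℝ) / p 0) * L :=
    mul_nonneg (by positivity) (Real.sInf_nonneg fun l hl => hl.1.le)
  have hδinv : 1 - δ ≤ (1 + δ)⁻¹ := by
    rw [← one_div, le_div_iff₀ (by linarith)]
    nlinarith
  rw [hL, mul_assoc, mul_assoc, hscale]
  exact ⟨(mul_le_mul_of_nonneg_right hδinv hL0).trans hlo, hhi⟩

/-- uniform (in `u`) two-sided dilation estimate for the gradient
`L^{p(·)}` norm. -/
theorem stmt10 {N : ℕ} (hN : 2 ≤ N) (Ω : Set (EN N)) (hΩo : IsOpen Ω)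
    (hΩne : Ω.Nonempty) (hΩb : Bornology.IsBounded Ω)
    (p q : EN N → ℝ) (hpc : Continuous p) (hqc : Continuous q)
    (c C : ℝ) (hc : 1 < c)
    (V : Set (EN N)) (hV : V ∈ 𝓝 (0 : EN N))
    (hbV : ∀ x ∈ V, c ≤ p x ∧ p x ≤ C ∧ 1 ≤ q x ∧ q x ≤ C)
    (ρ : ℝ → ℝ) (hρ : Modulus ρ)
    (hpρ : ∀ x y : EN N, |p x - p y| ≤ ρ (dist x y))
    (hqρ : ∀ x y : EN N, |q x - q y| ≤ ρ (dist x y))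
    (h0 : (0 : EN N) ∈ Ω) (hp₀ : 1 < p 0) (hpN : p 0 < N)
    (hq₀ : q 0 = pstar N (p 0)) :
    ∀ δ : ℝ, 0 < δ → ∃ ε₀ : ℝ, 0 < ε₀ ∧ ∀ ε : ℝ, 0 < ε → ε < ε₀ →
      ∀ u : EN N → ℝ, TestFn (ball (0 : EN N) ε) u → u ≠ 0 →
        (1 - δ) * ε ^ ((N : ℝ) / pstar N (p 0)) *
            luxNorm (ball (0 : EN N) 1) (fun x => p (ε • x)) (grad (fun x => u (ε • x))) ≤
          luxNorm (ball (0 : EN N) ε) p (grad u) ∧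
        luxNorm (ball (0 : EN N) ε) p (grad u) ≤
          (1 + δ) * ε ^ ((N : ℝ) / pstar N (p 0)) *
            luxNorm (ball (0 : EN N) 1) (fun x => p (ε • x)) (grad (fun x => u (ε • x))) :=
  stmt10_general p q hpc c C hc V hV hbV ρ hρ hpρ hp₀ hpN
end
end

section
/- Assume the critical set A is nonempty. Let x₀ ∈ ℝ^N and R ≥ 1 with B_R(x₀) ⊆ Ω, and write p_R^− := inf_{B_R(x₀)} p, p_R^+ := sup_{B_R(x₀)} p, q_R^+ := sup_{B_R(x₀)} q. Let u ∈ C_c^∞(B_1(0)) be nonzero with |u| ≤ 1 and |∇u| ≤ 1 on B_1(0). If R^{N − p_R^+}·∫_{B_1(0)} |∇u|^{p_R^+} dx > 1, R^N·∫_{B_1(0)} |u|^{q_R^+} dx > 1, and R^{(N − p_R^−)/p_R^− − N/q_R^+}·‖|∇u|‖_{L^{p_R^−}(B_1(0))} / ‖u‖_{L^{q_R^+}(B_1(0))} < S̄, then S(p(·),q(·),Ω) < S̄. -/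
open MeasureTheory Metric Set Filter Topology

noncomputable section

/-!
Blow `u` up to `v(x) = u((x - x₀)/R)`, a test function on `B_R(x₀) ⊆ Ω`, so that
`S(p(·),q(·),Ω)` is at most the Luxemburg quotient of `v`. Since `|∇v| = R⁻¹|∇u ∘ ·|` and
`R^N ∫ |∇u|^{p_R^-} ≥ 1`, the function `|∇v|` stays below its own `L^{p_R^-}` norm, and raising
a quotient `≤ 1` to the larger exponent `p(x)` only decreases it: `‖∇v‖_{p(·)} ≤ ‖∇v‖_{p_R^-}`.
Dually `|v| ≤ 1` and `‖v‖_{q_R^+} > 1` give `‖v‖_{q(·)} ≥ ‖v‖_{q_R^+}`. The constant-exponent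
norms of `∇v` and `v` scale like `R^{(N - p_R^-)/p_R^-}` and `R^{N/q_R^+}`, which yields the
quotient of the hypothesis.
-/

lemma rpow_mul_rpow_one_div {R I : ℝ} (hR : 0 < R) (hI : 0 ≤ I) (a s : ℝ) :
    (R ^ a * I) ^ (1 / s) = R ^ (a / s) * I ^ (1 / s) := by
  rw [Real.mul_rpow (by positivity) hI, ← Real.rpow_mul hR.le, mul_one_div]

section LuxemburgNorm

variable {N : ℕ} {m : Measure (EN N)} {U V : Set (EN N)} {r f : EN N → ℝ}

lemma luxNormM_nonneg : 0 ≤ luxNormM m U r f :=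
  Real.sInf_nonneg fun _ hl => hl.1.le

lemma luxNormM_le_of_setIntegral_le {l : ℝ} (hl : 0 < l)
    (h : ∫ x in U, (|f x| / l) ^ r x ∂m ≤ 1) : luxNormM m U r f ≤ l :=
  csInf_le ⟨0, fun _ hl' => hl'.1.le⟩ ⟨hl, h⟩

lemma setIntegral_abs_div_rpow (s : ℝ) {l : ℝ} (hl : 0 ≤ l) :
    ∫ x in U, (|f x| / l) ^ s ∂m = (∫ x in U, |f x| ^ s ∂m) / l ^ s := by
  simp_rw [Real.div_rpow (abs_nonneg _) hl]
  exact integral_div _ _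

lemma luxNormM_const {s : ℝ} (hs : 0 < s) (hI : 0 < ∫ x in U, |f x| ^ s ∂m) :
    luxNormM m U (fun _ => s) f = (∫ x in U, |f x| ^ s ∂m) ^ (1 / s) := by
  set I := ∫ x in U, |f x| ^ s ∂m
  have hadm : {l : ℝ | 0 < l ∧ ∫ x in U, (|f x| / l) ^ s ∂m ≤ 1} = Ici (I ^ (1 / s)) := by
    ext l
    simp only [mem_ofPred_eq, mem_Ici]
    constructor
    · rintro ⟨hl, hle⟩
      rw [setIntegral_abs_div_rpow s hl.le, div_le_one (by positivity)] at hle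
      calc I ^ (1 / s) ≤ (l ^ s) ^ (1 / s) := by gcongr
        _ = l := by rw [one_div, Real.rpow_rpow_inv hl.le hs.ne']
    · intro hle
      have hl : 0 < l := (Real.rpow_pos_of_pos hI _).trans_le hle
      refine ⟨hl, ?_⟩
      rw [setIntegral_abs_div_rpow s hl.le, div_le_one (by positivity)]
      calc I = (I ^ (1 / s)) ^ s := by rw [one_div, Real.rpow_inv_rpow hI.le hs.ne']
        _ ≤ l ^ s := by gcongr
  rw [luxNormM, hadm, csInf_Ici]

lemma luxNormM_eq_of_support_subset (hUm : MeasurableSet U) (hVU : V ⊆ U)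
    (hf : Function.support f ⊆ V) (hr : ∀ x ∈ U, r x ≠ 0) :
    luxNormM m U r f = luxNormM m V r f := by
  unfold luxNormM
  congr 1
  ext l
  simp only [mem_ofPred_eq]
  rw [setIntegral_eq_of_subset_of_forall_sdiff_eq_zero hUm hVU]
  intro x hx
  rw [Function.notMem_support.1 fun h => hx.2 (hf h), abs_zero, zero_div,
    Real.zero_rpow (hr x hx.1)]

lemma integrableOn_rpow_of_le (hUm : MeasurableSet U) (hU : m U ≠ ⊤) {g : EN N → ℝ}
    (hg : Measurable g) (hr : Measurable r) {M s : ℝ} (hgM : ∀ x ∈ U, 0 ≤ g x ∧ g x ≤ M)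
    (hrs : ∀ x ∈ U, 0 ≤ r x ∧ r x ≤ s) : IntegrableOn (fun x => g x ^ r x) U m := by
  refine Measure.integrableOn_of_bounded hU (hg.pow hr).aestronglyMeasurable
    (M := max 1 M ^ s) (ae_restrict_of_forall_mem hUm fun x hx => ?_)
  obtain ⟨hg0, hgM⟩ := hgM x hx
  obtain ⟨hr0, hrs⟩ := hrs x hx
  have hs : 0 ≤ s := hr0.trans hrs
  rw [Real.norm_eq_abs, abs_of_nonneg (Real.rpow_nonneg hg0 _)]
  calc g x ^ r x ≤ max 1 (g x) ^ r x := by gcongr; exact le_max_right _ _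
    _ ≤ max 1 (g x) ^ s := Real.rpow_le_rpow_of_exponent_le (le_max_left _ _) hrs
    _ ≤ max 1 M ^ s := by gcongr

lemma setIntegral_rpow_le_setIntegral_rpow (hUm : MeasurableSet U) (hU : m U ≠ ⊤)
    {g : EN N → ℝ} (hg : Measurable g) (hg1 : ∀ x ∈ U, 0 ≤ g x ∧ g x ≤ 1) {a b : ℝ}
    (ha : 0 ≤ a) (hab : a ≤ b) : ∫ x in U, g x ^ b ∂m ≤ ∫ x in U, g x ^ a ∂m :=
  integral_mono_of_nonneg
    (ae_restrict_of_forall_mem hUm fun x hx => Real.rpow_nonneg (hg1 x hx).1 _)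
    (integrableOn_rpow_of_le hUm hU hg measurable_const hg1 fun _ _ => ⟨ha, le_rfl⟩)
    (ae_restrict_of_forall_mem hUm fun x hx =>
      Real.rpow_le_rpow_of_exponent_ge' (hg1 x hx).1 (hg1 x hx).2 ha hab)

lemma luxNormM_le_luxNormM_const (hUm : MeasurableSet U) {s : ℝ} (hs : 0 < s)
    (hsr : ∀ x ∈ U, s ≤ r x) (hint : IntegrableOn (fun x => |f x| ^ s) U m)
    (hI : 0 < ∫ x in U, |f x| ^ s ∂m) (hf : ∀ x ∈ U, |f x| ≤ luxNormM m U (fun _ => s) f) :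
    luxNormM m U r f ≤ luxNormM m U (fun _ => s) f := by
  set l := luxNormM m U (fun _ => s) f
  have hl : l = (∫ x in U, |f x| ^ s ∂m) ^ (1 / s) := luxNormM_const hs hI
  have hl0 : 0 < l := hl ▸ Real.rpow_pos_of_pos hI _
  refine luxNormM_le_of_setIntegral_le hl0 ?_
  have hbase : ∀ x ∈ U, 0 ≤ |f x| / l ∧ |f x| / l ≤ 1 := fun x hx =>
    ⟨by positivity, (div_le_one hl0).2 (hf x hx)⟩
  calc ∫ x in U, (|f x| / l) ^ r x ∂m ≤ ∫ x in U, (|f x| / l) ^ s ∂m :=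
        integral_mono_of_nonneg
          (ae_restrict_of_forall_mem hUm fun x _ => by positivity)
          (by simp_rw [Real.div_rpow (abs_nonneg _) hl0.le]; exact hint.div_const _)
          (ae_restrict_of_forall_mem hUm fun x hx =>
            Real.rpow_le_rpow_of_exponent_ge' (hbase x hx).1 (hbase x hx).2 hs.le (hsr x hx))
    _ = 1 := by
        rw [setIntegral_abs_div_rpow s hl0.le, hl, one_div, Real.rpow_inv_rpow hI.le hs.ne',
          div_self hI.ne']

lemma luxNormM_admissible_nonempty (hU : m U ≠ ⊤) (hf : ∀ x ∈ U, |f x| ≤ 1)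
    (hr : ∀ x ∈ U, 1 ≤ r x) :
    {l : ℝ | 0 < l ∧ ∫ x in U, (|f x| / l) ^ r x ∂m ≤ 1}.Nonempty := by
  set l := max 1 (m.real U)
  have hl1 : 1 ≤ l := le_max_left _ _
  have hl0 : 0 < l := one_pos.trans_le hl1
  refine ⟨l, hl0, ?_⟩
  have hbound : ∀ x ∈ U, ‖(|f x| / l) ^ r x‖ ≤ 1 / l := fun x hx => by
    have hbase : |f x| / l ≤ 1 / l := by gcongr; exact hf x hx
    rw [Real.norm_eq_abs, abs_of_nonneg (by positivity)]
    calc (|f x| / l) ^ r x ≤ (|f x| / l) ^ (1 : ℝ) :=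
          Real.rpow_le_rpow_of_exponent_ge' (by positivity)
            (hbase.trans ((div_le_one hl0).2 hl1)) zero_le_one (hr x hx)
      _ ≤ 1 / l := by rwa [Real.rpow_one]
  calc ∫ x in U, (|f x| / l) ^ r x ∂m ≤ ‖∫ x in U, (|f x| / l) ^ r x ∂m‖ := Real.le_norm_self _
    _ ≤ 1 / l * m.real U := norm_setIntegral_le_of_norm_le_const hU.lt_top hbound
    _ ≤ 1 := by rw [one_div_mul_eq_div, div_le_one hl0]; exact le_max_right _ _

/-- An admissible level `l` for `r` gives the admissible level `max l 1` for `s`, because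
`|f| / max l 1 ≤ 1` and `r ≤ s`; as `‖f‖_s > 1`, this forces `‖f‖_s ≤ l`. -/
lemma luxNormM_const_le_luxNormM (hUm : MeasurableSet U) (hU : m U ≠ ⊤) (hf : Measurable f)
    (hr : Measurable r) {s : ℝ} (hrs : ∀ x ∈ U, 1 ≤ r x ∧ r x ≤ s)
    (hf1 : ∀ x ∈ U, |f x| ≤ 1) (h1 : 1 < luxNormM m U (fun _ => s) f) :
    luxNormM m U (fun _ => s) f ≤ luxNormM m U r f := by
  refine le_csInf (luxNormM_admissible_nonempty hU hf1 fun x hx => (hrs x hx).1) ?_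
  rintro l ⟨hl0, hle⟩
  set l' := max l 1
  have hl'0 : 0 < l' := hl0.trans_le (le_max_left _ _)
  have hint : ∀ t, 0 < t → IntegrableOn (fun x => (|f x| / t) ^ r x) U m := fun t ht =>
    integrableOn_rpow_of_le hUm hU (hf.abs.div_const t) hr (M := 1 / t)
      (fun x hx => ⟨by positivity, by gcongr; exact hf1 x hx⟩)
      fun x hx => ⟨by linarith [(hrs x hx).1], (hrs x hx).2⟩
  have hbase : ∀ x ∈ U, 0 ≤ |f x| / l' ∧ |f x| / l' ≤ 1 := fun x hx =>
    ⟨by positivity, (div_le_one hl'0).2 ((hf1 x hx).trans (le_max_right _ _))⟩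
  have hl' : luxNormM m U (fun _ => s) f ≤ l' := by
    refine luxNormM_le_of_setIntegral_le hl'0 ?_
    calc ∫ x in U, (|f x| / l') ^ s ∂m ≤ ∫ x in U, (|f x| / l') ^ r x ∂m :=
          integral_mono_of_nonneg
            (ae_restrict_of_forall_mem hUm fun x _ => by positivity) (hint l' hl'0)
            (ae_restrict_of_forall_mem hUm fun x hx =>
              Real.rpow_le_rpow_of_exponent_ge' (hbase x hx).1 (hbase x hx).2
                (by linarith [(hrs x hx).1]) (hrs x hx).2)
      _ ≤ ∫ x in U, (|f x| / l) ^ r x ∂m :=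
          integral_mono_of_nonneg
            (ae_restrict_of_forall_mem hUm fun x _ => by positivity) (hint l hl0)
            (ae_restrict_of_forall_mem hUm fun x hx =>
              Real.rpow_le_rpow (by positivity)
                (div_le_div_of_nonneg_left (abs_nonneg _) hl0 (le_max_left _ _))
                (by linarith [(hrs x hx).1]))
      _ ≤ 1 := hle
  exact (le_max_iff.1 hl').resolve_right h1.not_ge

end LuxemburgNorm

section Rescaling

variable {N : ℕ} {x₀ : EN N} {R : ℝ}

def rescale (x₀ : EN N) (R : ℝ) (u : EN N → ℝ) : EN N → ℝ := fun x => u (R⁻¹ • (x - x₀))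

lemma smul_sub_mem_ball_one_iff (hR : 0 < R) {x : EN N} :
    R⁻¹ • (x - x₀) ∈ ball (0 : EN N) 1 ↔ x ∈ ball x₀ R := by
  rw [mem_ball_zero_iff, norm_smul, norm_inv, Real.norm_of_nonneg hR.le, inv_mul_lt_one₀ hR,
    mem_ball_iff_norm]

lemma setIntegral_ball_rescale (hR : 0 < R) (F : EN N → ℝ) :
    ∫ x in ball x₀ R, rescale x₀ R F x = R ^ N * ∫ y in ball (0 : EN N) 1, F y := by
  have hind : (ball x₀ R).indicator (rescale x₀ R F)
      = fun x => (ball (0 : EN N) 1).indicator F (R⁻¹ • (x - x₀)) := by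
    ext x
    by_cases hx : x ∈ ball x₀ R
    · rw [indicator_of_mem hx, indicator_of_mem ((smul_sub_mem_ball_one_iff hR).2 hx)]
      rfl
    · rw [indicator_of_notMem hx,
        indicator_of_notMem fun h => hx ((smul_sub_mem_ball_one_iff hR).1 h)]
  have htrans : ∫ x, (ball (0 : EN N) 1).indicator F (R⁻¹ • (x - x₀))
      = ∫ x, (ball (0 : EN N) 1).indicator F (R⁻¹ • x) := by
    simpa [sub_eq_add_neg] using
      integral_add_right_eq_self (μ := volume)
        (fun z => (ball (0 : EN N) 1).indicator F (R⁻¹ • z)) (-x₀)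
  rw [← integral_indicator measurableSet_ball, hind, htrans,
    Measure.integral_comp_inv_smul_of_nonneg volume _ hR.le,
    integral_indicator measurableSet_ball, finrank_euclideanSpace_fin, smul_eq_mul]

lemma TestFn.rescale_ball {u : EN N → ℝ} (hR : 0 < R) (hu : TestFn (ball (0 : EN N) 1) u) :
    TestFn (ball x₀ R) (rescale x₀ R u) := by
  have hsupp : tsupport (rescale x₀ R u) ⊆ ball x₀ R := fun x hx =>
    (smul_sub_mem_ball_one_iff hR).1
      (hu.2.2 (tsupport_comp_subset_preimage u (f := fun x => R⁻¹ • (x - x₀)) (by fun_prop) hx))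
  exact ⟨hu.1.comp (by fun_prop), (isCompact_closedBall x₀ R).of_isClosed_subset
    (isClosed_tsupport _) (hsupp.trans ball_subset_closedBall), hsupp⟩

lemma rescale_ne_zero {u : EN N → ℝ} (hR : R ≠ 0) (hu : u ≠ 0) : rescale x₀ R u ≠ 0 := by
  obtain ⟨y, hy⟩ := Function.ne_iff.1 hu
  refine Function.ne_iff.2 ⟨x₀ + R • y, ?_⟩
  simpa [rescale, hR] using hy

lemma abs_grad (u : EN N → ℝ) (x : EN N) : |grad u x| = grad u x :=
  abs_norm _

lemma grad_rescale {u : EN N → ℝ} (hR : 0 < R) (hu : Differentiable ℝ u) (x : EN N) :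
    grad (rescale x₀ R u) x = R⁻¹ * rescale x₀ R (grad u) x := by
  have hA : HasFDerivAt (fun x => R⁻¹ • (x - x₀)) (R⁻¹ • ContinuousLinearMap.id ℝ (EN N)) x :=
    ((hasFDerivAt_id x).sub_const x₀).const_smul R⁻¹
  have hcomp : (fderiv ℝ u (R⁻¹ • (x - x₀))).comp (R⁻¹ • ContinuousLinearMap.id ℝ (EN N))
      = R⁻¹ • fderiv ℝ u (R⁻¹ • (x - x₀)) := by
    ext w
    simp
  change ‖fderiv ℝ (u ∘ fun x => R⁻¹ • (x - x₀)) x‖ = R⁻¹ * grad u (R⁻¹ • (x - x₀))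
  rw [((hu _).hasFDerivAt.comp x hA).fderiv, hcomp, norm_smul, norm_inv,
    Real.norm_of_nonneg hR.le, grad]

end Rescaling

lemma sobolevConst_le {N : ℕ} {p q v : EN N → ℝ} {U : Set (EN N)} (hv : TestFn U v)
    (hv0 : v ≠ 0) : sobolevConst p q U ≤ luxNorm U p (grad v) / luxNorm U q v :=
  csInf_le ⟨0, by rintro _ ⟨w, -, -, rfl⟩; exact div_nonneg luxNormM_nonneg luxNormM_nonneg⟩
    ⟨v, hv, hv0, rfl⟩

lemma support_grad_subset_tsupport {N : ℕ} (v : EN N → ℝ) :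
    Function.support (grad v) ⊆ tsupport v :=
  fun _ hx => support_fderiv_subset ℝ (norm_ne_zero_iff.1 hx)

lemma luxNorm_div_eq_of_tsupport_subset {N : ℕ} {p q v : EN N → ℝ} {U V : Set (EN N)}
    (hUm : MeasurableSet U) (hVU : V ⊆ U) (hv : tsupport v ⊆ V) (hp : ∀ x ∈ U, p x ≠ 0)
    (hq : ∀ x ∈ U, q x ≠ 0) :
    luxNorm U p (grad v) / luxNorm U q v = luxNorm V p (grad v) / luxNorm V q v := by
  rw [luxNorm, luxNorm, luxNormM_eq_of_support_subset hUm hVU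
      ((support_grad_subset_tsupport v).trans hv) hp,
    luxNormM_eq_of_support_subset hUm hVU ((subset_tsupport v).trans hv) hq]
  rfl

section RescaledNorms

variable {N : ℕ} {x₀ : EN N} {R : ℝ}

lemma setIntegral_abs_rescale_rpow (hR : 0 < R) (f : EN N → ℝ) (s : ℝ) :
    ∫ x in ball x₀ R, |rescale x₀ R f x| ^ s
      = R ^ (N : ℝ) * ∫ y in ball (0 : EN N) 1, |f y| ^ s := by
  rw [Real.rpow_natCast]
  exact setIntegral_ball_rescale hR fun y => |f y| ^ s

lemma setIntegral_grad_rescale_rpow {u : EN N → ℝ} (hR : 0 < R) (hu : Differentiable ℝ u)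
    (s : ℝ) : ∫ x in ball x₀ R, grad (rescale x₀ R u) x ^ s
      = R ^ ((N : ℝ) - s) * ∫ y in ball (0 : EN N) 1, grad u y ^ s := by
  have hpt : ∀ x, grad (rescale x₀ R u) x ^ s = R⁻¹ ^ s * rescale x₀ R (fun y => grad u y ^ s) x :=
    fun x => by rw [grad_rescale hR hu]; exact Real.mul_rpow (by positivity) (norm_nonneg _)
  simp_rw [hpt]
  rw [integral_const_mul, setIntegral_ball_rescale hR, Real.rpow_sub hR, Real.inv_rpow hR.le,
    Real.rpow_natCast]
  ring

lemma luxNorm_rescale {f : EN N → ℝ} {s : ℝ} (hR : 0 < R) (hs : 0 < s)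
    (hI : 0 < ∫ y in ball (0 : EN N) 1, |f y| ^ s) :
    luxNorm (ball x₀ R) (fun _ => s) (rescale x₀ R f)
      = R ^ ((N : ℝ) / s) * luxNorm (ball (0 : EN N) 1) (fun _ => s) f := by
  have hint := setIntegral_abs_rescale_rpow (x₀ := x₀) hR f s
  rw [luxNorm, luxNorm, luxNormM_const hs (by rw [hint]; positivity), luxNormM_const hs hI, hint,
    rpow_mul_rpow_one_div hR hI.le]

lemma luxNorm_grad_rescale_le {p u : EN N → ℝ} {s : ℝ} (hR : 0 < R) (hu : Differentiable ℝ u)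
    (hgu : ∀ y ∈ ball (0 : EN N) 1, grad u y ≤ 1) (hs : 0 < s)
    (hsp : ∀ x ∈ ball x₀ R, s ≤ p x)
    (hI : 1 ≤ R ^ (N : ℝ) * ∫ y in ball (0 : EN N) 1, grad u y ^ s) :
    luxNorm (ball x₀ R) p (grad (rescale x₀ R u))
      ≤ R ^ (((N : ℝ) - s) / s) * luxNorm (ball (0 : EN N) 1) (fun _ => s) (grad u) := by
  set I := ∫ y in ball (0 : EN N) 1, grad u y ^ s
  have hI0 : 0 < I := pos_of_mul_pos_right (one_pos.trans_le hI) (by positivity)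
  have hval := setIntegral_grad_rescale_rpow (x₀ := x₀) hR hu s
  have hnorm : luxNorm (ball x₀ R) (fun _ => s) (grad (rescale x₀ R u))
      = R ^ (((N : ℝ) - s) / s) * I ^ (1 / s) := by
    rw [luxNorm, luxNormM_const hs (by simp only [abs_grad, hval]; positivity)]
    simp only [abs_grad]
    rw [hval, rpow_mul_rpow_one_div hR hI0.le]
  have hgrad_le : ∀ x ∈ ball x₀ R, grad (rescale x₀ R u) x ≤ R⁻¹ := fun x hx => by
    rw [grad_rescale hR hu]
    exact mul_le_of_le_one_right (by positivity) (hgu _ ((smul_sub_mem_ball_one_iff hR).2 hx))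
  have hR_le : R⁻¹ ≤ R ^ (((N : ℝ) - s) / s) * I ^ (1 / s) := by
    have hsplit : R ^ (((N : ℝ) - s) / s) = R⁻¹ * R ^ ((N : ℝ) / s) := by
      rw [sub_div, div_self hs.ne', Real.rpow_sub hR, Real.rpow_one, div_eq_inv_mul]
    rw [hsplit, mul_assoc, ← rpow_mul_rpow_one_div hR hI0.le]
    exact le_mul_of_one_le_right (by positivity) (Real.one_le_rpow hI (by positivity))
  have hnorm_u : luxNorm (ball (0 : EN N) 1) (fun _ => s) (grad u) = I ^ (1 / s) := by
    rw [luxNorm, luxNormM_const hs (by simpa only [abs_grad] using hI0)]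
    simp only [abs_grad, I]
  rw [hnorm_u, ← hnorm]
  refine luxNormM_le_luxNormM_const measurableSet_ball hs hsp ?_ ?_ fun x hx => ?_
  · simp only [abs_grad]
    exact integrableOn_rpow_of_le measurableSet_ball measure_ball_lt_top.ne
      (measurable_fderiv ℝ _).norm measurable_const
      (fun x hx => ⟨norm_nonneg _, hgrad_le x hx⟩) fun _ _ => ⟨hs.le, le_rfl⟩
  · simp only [abs_grad, hval]
    positivity
  · rw [abs_grad]
    exact (hgrad_le x hx).trans (hR_le.trans_eq hnorm.symm)

lemma le_luxNorm_rescale {q u : EN N → ℝ} {s : ℝ} (hR : 0 < R) (hu : Measurable u)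
    (hu1 : ∀ y ∈ ball (0 : EN N) 1, |u y| ≤ 1) (hq : Measurable q)
    (hqs : ∀ x ∈ ball x₀ R, 1 ≤ q x ∧ q x ≤ s)
    (hI : 1 < R ^ (N : ℝ) * ∫ y in ball (0 : EN N) 1, |u y| ^ s) :
    R ^ ((N : ℝ) / s) * luxNorm (ball (0 : EN N) 1) (fun _ => s) u
      ≤ luxNorm (ball x₀ R) q (rescale x₀ R u) := by
  have hs : 0 < s := by linarith [hqs x₀ (mem_ball_self hR)]
  have hI0 := pos_of_mul_pos_right (one_pos.trans hI) (by positivity)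
  rw [← luxNorm_rescale hR hs hI0]
  refine luxNormM_const_le_luxNormM measurableSet_ball measure_ball_lt_top.ne
    (show Measurable (rescale x₀ R u) from hu.comp (by fun_prop)) hq hqs
    (fun x hx => hu1 _ ((smul_sub_mem_ball_one_iff hR).2 hx)) ?_
  rw [← luxNorm, luxNorm_rescale hR hs hI0, luxNorm, luxNormM_const hs hI0,
    ← rpow_mul_rpow_one_div hR hI0.le]
  exact Real.one_lt_rpow hI (by positivity)

lemma one_le_rpow_mul_setIntegral_grad_rpow {u : EN N → ℝ} {a b : ℝ} (hR : 1 ≤ R)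
    (hgu : ∀ y ∈ ball (0 : EN N) 1, grad u y ≤ 1) (ha : 0 ≤ a) (hab : a ≤ b)
    (h : 1 < R ^ ((N : ℝ) - b) * ∫ y in ball (0 : EN N) 1, grad u y ^ b) :
    1 ≤ R ^ (N : ℝ) * ∫ y in ball (0 : EN N) 1, grad u y ^ a :=
  h.le.trans <| mul_le_mul (Real.rpow_le_rpow_of_exponent_le hR (by linarith))
    (setIntegral_rpow_le_setIntegral_rpow measurableSet_ball measure_ball_lt_top.ne
      (measurable_fderiv ℝ u).norm (fun y hy => ⟨norm_nonneg _, hgu y hy⟩) ha hab)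
    (setIntegral_nonneg measurableSet_ball fun _ _ => Real.rpow_nonneg (norm_nonneg _) _)
    (by positivity)

end RescaledNorms

lemma luxNorm_ratio_rescale_le {N : ℕ} {x₀ : EN N} {R : ℝ} {p q u : EN N → ℝ} {pm qp : ℝ}
    (hR : 0 < R) (hu : ContDiff ℝ 1 u) (hu1 : ∀ y ∈ ball (0 : EN N) 1, |u y| ≤ 1)
    (hgu : ∀ y ∈ ball (0 : EN N) 1, grad u y ≤ 1) (hq : Measurable q) (hpm : 0 < pm)
    (hp : ∀ x ∈ ball x₀ R, pm ≤ p x) (hqs : ∀ x ∈ ball x₀ R, 1 ≤ q x ∧ q x ≤ qp)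
    (hIp : 1 ≤ R ^ (N : ℝ) * ∫ y in ball (0 : EN N) 1, grad u y ^ pm)
    (hIq : 1 < R ^ (N : ℝ) * ∫ y in ball (0 : EN N) 1, |u y| ^ qp) :
    luxNorm (ball x₀ R) p (grad (rescale x₀ R u)) / luxNorm (ball x₀ R) q (rescale x₀ R u)
      ≤ R ^ (((N : ℝ) - pm) / pm - N / qp) *
        (luxNorm (ball (0 : EN N) 1) (fun _ => pm) (grad u) /
          luxNorm (ball (0 : EN N) 1) (fun _ => qp) u) := by
  have hqp : 0 < qp := by linarith [hqs x₀ (mem_ball_self hR)]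
  have hIq0 := pos_of_mul_pos_right (one_pos.trans hIq) (by positivity)
  have hu0 : 0 < luxNorm (ball (0 : EN N) 1) (fun _ => qp) u := by
    rw [luxNorm, luxNormM_const hqp hIq0]
    positivity
  calc _ ≤ (R ^ (((N : ℝ) - pm) / pm) * luxNorm (ball (0 : EN N) 1) (fun _ => pm) (grad u)) /
          (R ^ ((N : ℝ) / qp) * luxNorm (ball (0 : EN N) 1) (fun _ => qp) u) :=
        div_le_div₀ (mul_nonneg (by positivity) luxNormM_nonneg)
          (luxNorm_grad_rescale_le hR (hu.differentiable one_ne_zero) hgu hpm hp hIp)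
          (by positivity)
          (le_luxNorm_rescale hR hu.continuous.measurable hu1 hq hqs hIq)
    _ = _ := by
        rw [Real.rpow_sub hR]
        ring

theorem stmt13_general {N : ℕ} (Ω : Set (EN N)) (hΩo : IsOpen Ω)
    (p q : EN N → ℝ) (hqc : Continuous q)
    (c C : ℝ) (hc : 1 < c)
    (hpb : ∀ x ∈ Ω, c ≤ p x ∧ p x ≤ C)
    (hqb : ∀ x ∈ Ω, 1 ≤ q x ∧ q x ≤ C)
    (x₀ : EN N) (R : ℝ) (hR : 1 ≤ R) (hball : ball x₀ R ⊆ Ω)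
    (pm pp qp : ℝ)
    (hpm : pm = sInf (p '' ball x₀ R)) (hpp : pp = sSup (p '' ball x₀ R))
    (hqp : qp = sSup (q '' ball x₀ R))
    (u : EN N → ℝ) (hu : TestFn (ball (0 : EN N) 1) u) (hune : u ≠ 0)
    (hub : ∀ x ∈ ball (0 : EN N) 1, |u x| ≤ 1)
    (hgub : ∀ x ∈ ball (0 : EN N) 1, grad u x ≤ 1)
    (h1 : 1 < R ^ ((N : ℝ) - pp) * ∫ x in ball (0 : EN N) 1, grad u x ^ pp)
    (h2 : 1 < R ^ (N : ℝ) * ∫ x in ball (0 : EN N) 1, |u x| ^ qp)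
    (h3 : R ^ (((N : ℝ) - pm) / pm - (N : ℝ) / qp) *
        (luxNorm (ball (0 : EN N) 1) (fun _ => pm) (grad u) /
          luxNorm (ball (0 : EN N) 1) (fun _ => qp) u) < SbarCrit p q Ω) :
    sobolevConst p q Ω < SbarCrit p q Ω := by
  have hR0 : 0 < R := one_pos.trans_le hR
  have hpm_le : ∀ x ∈ ball x₀ R, pm ≤ p x := fun x hx => hpm ▸
    csInf_le ⟨c, forall_mem_image.2 fun y hy => (hpb y (hball hy)).1⟩ (mem_image_of_mem p hx)
  have hle_pp : ∀ x ∈ ball x₀ R, p x ≤ pp := fun x hx => hpp ▸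
    le_csSup ⟨C, forall_mem_image.2 fun y hy => (hpb y (hball hy)).2⟩ (mem_image_of_mem p hx)
  have hle_qp : ∀ x ∈ ball x₀ R, q x ≤ qp := fun x hx => hqp ▸
    le_csSup ⟨C, forall_mem_image.2 fun y hy => (hqb y (hball hy)).2⟩ (mem_image_of_mem q hx)
  have hc_pm : c ≤ pm := hpm ▸ le_csInf ((nonempty_ball.2 hR0).image p)
    (forall_mem_image.2 fun y hy => (hpb y (hball hy)).1)
  have hv := hu.rescale_ball (x₀ := x₀) hR0
  calc sobolevConst p q Ω
      ≤ luxNorm Ω p (grad (rescale x₀ R u)) / luxNorm Ω q (rescale x₀ R u) :=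
        sobolevConst_le ⟨hv.1, hv.2.1, hv.2.2.trans hball⟩ (rescale_ne_zero hR0.ne' hune)
    _ = luxNorm (ball x₀ R) p (grad (rescale x₀ R u)) / luxNorm (ball x₀ R) q (rescale x₀ R u) :=
        luxNorm_div_eq_of_tsupport_subset hΩo.measurableSet hball hv.2.2
          (fun x hx => by linarith [hpb x hx]) fun x hx => by linarith [hqb x hx]
    _ ≤ _ := luxNorm_ratio_rescale_le hR0 (hu.1.of_le (by simp)) hub hgub hqc.measurable
        (by linarith) hpm_le (fun x hx => ⟨(hqb x (hball hx)).1, hle_qp x hx⟩)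
        (one_le_rpow_mul_setIntegral_grad_rpow hR hgub (by linarith)
          ((hpm_le x₀ (mem_ball_self hR0)).trans (hle_pp x₀ (mem_ball_self hR0))) h1) h2
    _ < SbarCrit p q Ω := h3

/-- a large subcritical ball forces the strict inequality
`S(p(·),q(·),Ω) < S̄`. -/
theorem stmt13 {N : ℕ} (hN : 2 ≤ N) (Ω : Set (EN N)) (hΩo : IsOpen Ω)
    (hΩne : Ω.Nonempty) (hΩb : Bornology.IsBounded Ω)
    (p q : EN N → ℝ) (hpc : Continuous p) (hqc : Continuous q)
    (c C : ℝ) (hc : 1 < c)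
    (hpb : ∀ x ∈ Ω, c ≤ p x ∧ p x ≤ C)
    (hqb : ∀ x ∈ Ω, 1 ≤ q x ∧ q x ≤ C)
    (hA : (critSet p q Ω).Nonempty)
    (x₀ : EN N) (R : ℝ) (hR : 1 ≤ R) (hball : ball x₀ R ⊆ Ω)
    (pm pp qp : ℝ)
    (hpm : pm = sInf (p '' ball x₀ R)) (hpp : pp = sSup (p '' ball x₀ R))
    (hqp : qp = sSup (q '' ball x₀ R))
    (u : EN N → ℝ) (hu : TestFn (ball (0 : EN N) 1) u) (hune : u ≠ 0)
    (hub : ∀ x ∈ ball (0 : EN N) 1, |u x| ≤ 1)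
    (hgub : ∀ x ∈ ball (0 : EN N) 1, grad u x ≤ 1)
    (h1 : 1 < R ^ ((N : ℝ) - pp) * ∫ x in ball (0 : EN N) 1, grad u x ^ pp)
    (h2 : 1 < R ^ (N : ℝ) * ∫ x in ball (0 : EN N) 1, |u x| ^ qp)
    (h3 : R ^ (((N : ℝ) - pm) / pm - (N : ℝ) / qp) *
        (luxNorm (ball (0 : EN N) 1) (fun _ => pm) (grad u) /
          luxNorm (ball (0 : EN N) 1) (fun _ => qp) u) < SbarCrit p q Ω) :
    sobolevConst p q Ω < SbarCrit p q Ω :=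
  stmt13_general Ω hΩo p q hqc c C hc hpb hqb x₀ R hR hball pm pp qp hpm hpp hqp u hu hune hub hgub
    h1 h2 h3
end
end
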